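/- arXiv:2406.17712 — 6 statements merged into one kernel-verified Lean document; each statement's English description precedes it below -/
import Mathlib

section
/- Let L be a commutative unital quantale and let (P, e) be a continuous L-dcpo. Then the map x ↦ ⇓x is an L-order isomorphism from (P, e) onto ({⇓x | x ∈ P}, sub); that is, it is a bijection onto {⇓x | x ∈ P} and for all x, y ∈ P, e(x, y) = sub(⇓x, ⇓y). -/
universe u

/-- A commutative unital quantale structure on a complete lattice `L`. -/
structure CommQuantale (L : Type u) [CompleteLattice L] : Type u where
  mul : L → L → L
  mul_comm : ∀ a b, mul a b = mul b a
  mul_assoc : ∀ a b c, mul (mul a b) c = mul a (mul b c)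
  unit : L
  mul_unit : ∀ a, mul a unit = a
  mul_sSup : ∀ (a : L) (S : Set L), mul a (sSup S) = ⨆ s ∈ S, mul a s

namespace CommQuantale

variable {L : Type u} [CompleteLattice L]

/-- The residuation `b → c`, the right adjoint of `⊗`. -/
def res (Q : CommQuantale L) (b c : L) : L := sSup {a | Q.mul a b ≤ c}

/-- `sub(A,B) = ⋀ₓ (A x → B x)` for `L`-subsets. -/
def subL (Q : CommQuantale L) {X : Type u} (A B : X → L) : L :=
  ⨅ x, Q.res (A x) (B x)

open Classical in
/-- The characteristic function `u_x`. -/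
noncomputable def ux (Q : CommQuantale L) {X : Type u} (x : X) : X → L :=
  fun y => if y = x then Q.unit else ⊥

/-- `e` is an `L`-order on `P`. -/
def IsLOrder (Q : CommQuantale L) {P : Type u} (e : P → P → L) : Prop :=
  (∀ x, Q.unit ≤ e x x) ∧
  (∀ x y z, Q.mul (e x y) (e y z) ≤ e x z) ∧
  (∀ x y, Q.unit ≤ e x y → Q.unit ≤ e y x → x = y)

/-- `D` is a directed `L`-subset of `(P, e)`. -/
def IsDirectedL (Q : CommQuantale L) {P : Type u} (e : P → P → L) (D : P → L) : Prop :=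
  (Q.unit ≤ ⨆ x, D x) ∧
  (∀ x y, Q.mul (D x) (D y) ≤ ⨆ z, Q.mul (Q.mul (D z) (e x z)) (e y z))

/-- `x₀` is the supremum `⊔A` of the `L`-subset `A`. -/
def IsSupL (Q : CommQuantale L) {P : Type u} (e : P → P → L) (A : P → L) (x₀ : P) : Prop :=
  ∀ y, e x₀ y = Q.subL A (fun x => e x y)

/-- `(P, e)` is an `L`-dcpo: every directed `L`-subset has a supremum. -/
def IsDcpoL (Q : CommQuantale L) {P : Type u} (e : P → P → L) : Prop :=
  ∀ D : P → L, Q.IsDirectedL e D → ∃ s, Q.IsSupL e D s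

/-- `⇓x : P → L`, i.e. `⇓x(y) = ⋀_{D directed} (e(x, ⊔D) → ⋁_d D(d) ⊗ e(y,d))`. -/
def wayBelow (Q : CommQuantale L) {P : Type u} (e : P → P → L) (x : P) : P → L := fun y =>
  ⨅ (D : P → L) (_ : Q.IsDirectedL e D) (s : P) (_ : Q.IsSupL e D s),
    Q.res (e x s) (⨆ d, Q.mul (D d) (e y d))

/-- `(P, e)` is a continuous `L`-dcpo. -/
def IsContinuousLDcpo (Q : CommQuantale L) {P : Type u} (e : P → P → L) : Prop :=
  Q.IsLOrder e ∧ Q.IsDcpoL e ∧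
  ∀ x, Q.IsDirectedL e (Q.wayBelow e x) ∧ Q.IsSupL e (Q.wayBelow e x) x

open Classical in
/-- `k(x)(y) = e(y,x)` if `y` is compact (i.e. `u ≤ ⇓y(y)`), else `0`. -/
noncomputable def kfun (Q : CommQuantale L) {P : Type u} (e : P → P → L) (x : P) : P → L :=
  fun y => if Q.unit ≤ Q.wayBelow e y y then e y x else ⊥

/-- `(P, e)` is an algebraic `L`-dcpo. -/
noncomputable def IsAlgebraicLDcpo (Q : CommQuantale L) {P : Type u} (e : P → P → L) : Prop :=
  Q.IsLOrder e ∧ Q.IsDcpoL e ∧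
  ∀ x, Q.IsDirectedL e (Q.kfun e x) ∧ Q.IsSupL e (Q.kfun e x) x

/-- `cl` is a generalized `L`-closure operator: (GC1) and (GC2). -/
def IsGenClosure (Q : CommQuantale L) {X : Type u} (cl : (X → L) → (X → L)) : Prop :=
  (∀ A B, Q.subL A B ≤ Q.subL (cl A) (cl B)) ∧
  (∀ A, cl (cl A) ≤ cl A)

/-- Interpolation conditions (IT1)-(IT3). -/
noncomputable def IsInterpolative (Q : CommQuantale L) {X : Type u}
    (cl : (X → L) → (X → L)) : Prop :=
  (∀ x, Q.unit ≤ ⨆ t, cl (Q.ux x) t) ∧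
  (∀ x y, cl (Q.ux x) y ≤ ⨆ t, Q.mul (cl (Q.ux x) t) (cl (Q.ux t) y)) ∧
  (∀ x a b, Q.mul (cl (Q.ux x) a) (cl (Q.ux x) b) ≤
    ⨆ t, Q.mul (Q.mul (cl (Q.ux x) t) (cl (Q.ux t) a)) (cl (Q.ux t) b))

/-- `U` is a directed closed set: (DC1)-(DC4). -/
noncomputable def IsDirClosed (Q : CommQuantale L) {X : Type u}
    (cl : (X → L) → (X → L)) (U : X → L) : Prop :=
  (Q.unit ≤ ⨆ x, U x) ∧
  (∀ x, U x ≤ Q.subL (cl (Q.ux x)) U) ∧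
  (∀ x, U x ≤ ⨆ y, Q.mul (U y) (cl (Q.ux y) x)) ∧
  (∀ x y, Q.mul (U x) (U y) ≤
    ⨆ z, Q.mul (Q.mul (U z) (cl (Q.ux z) x)) (cl (Q.ux z) y))

lemma mul_mono_right (Q : CommQuantale L) {a b c : L} (h : b ≤ c) :
    Q.mul a b ≤ Q.mul a c := by
  have h1 : Q.mul a (sSup {b, c}) = ⨆ s ∈ ({b, c} : Set L), Q.mul a s := Q.mul_sSup _ _
  have hc : sSup ({b, c} : Set L) = c := by
    rw [sSup_pair, sup_eq_right.mpr h]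
  rw [hc] at h1
  rw [h1]
  exact le_biSup _ (by simp)

lemma mul_mono_left (Q : CommQuantale L) {a b c : L} (h : b ≤ c) :
    Q.mul b a ≤ Q.mul c a := by
  rw [Q.mul_comm b, Q.mul_comm c]; exact Q.mul_mono_right h

lemma le_res_iff (Q : CommQuantale L) {a b c : L} : a ≤ Q.res b c ↔ Q.mul a b ≤ c := by
  constructor
  · intro h
    calc Q.mul a b ≤ Q.mul (Q.res b c) b := Q.mul_mono_left h
    _ ≤ c := by
        rw [res, Q.mul_comm, Q.mul_sSup]
        exact iSup₂_le fun x hx => by rw [Q.mul_comm]; exact hx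
  · intro h; exact le_sSup h

lemma res_mono_right (Q : CommQuantale L) {a b c : L} (h : b ≤ c) :
    Q.res a b ≤ Q.res a c :=
  sSup_le_sSup fun x hx => le_trans hx h

lemma unit_le_res_self (Q : CommQuantale L) (a : L) : Q.unit ≤ Q.res a a :=
  Q.le_res_iff.mpr (by rw [Q.mul_comm, Q.mul_unit])

end CommQuantale
open CommQuantale in
/-- For a continuous L-dcpo (P,e), the map x ↦ ⇓x is an L-order isomorphism
onto {⇓x | x ∈ P}: it is injective (hence a bijection onto its image) and
e(x,y) = sub(⇓x, ⇓y). -/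
theorem stmt0 {L P : Type u} [CompleteLattice L] (Q : CommQuantale L)
    (e : P → P → L) (hord : Q.IsLOrder e) (hdcpo : Q.IsDcpoL e)
    (hcont : ∀ x, Q.IsDirectedL e (Q.wayBelow e x) ∧ Q.IsSupL e (Q.wayBelow e x) x) :
    Function.Injective (fun x => Q.wayBelow e x) ∧
    (∀ x y, e x y = Q.subL (Q.wayBelow e x) (Q.wayBelow e y)) := by
  obtain ⟨hrefl, htrans, hanti⟩ := hord
  -- e x y = sub(⇓x, ⇓y)
  have key : ∀ x y, e x y = Q.subL (Q.wayBelow e x) (Q.wayBelow e y) := by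
    intro x y
    apply le_antisymm
    · -- e x y ≤ sub(⇓x, ⇓y)
      apply le_iInf
      intro z
      rw [CommQuantale.le_res_iff]
      -- need: mul (e x y) (⇓x z) ≤ ⇓y z
      apply le_iInf; intro D
      apply le_iInf; intro hD
      apply le_iInf; intro s
      apply le_iInf; intro hs
      rw [CommQuantale.le_res_iff]
      -- mul (mul (e x y) (⇓x z)) (e y s) ≤ ⨆ d, mul (D d) (e z d)
      have h1 : Q.wayBelow e x z ≤ Q.res (e x s) (⨆ d, Q.mul (D d) (e z d)) := by
        refine le_trans (iInf_le _ D) ?_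
        refine le_trans (iInf_le _ hD) ?_
        refine le_trans (iInf_le _ s) ?_
        exact iInf_le _ hs
      have h2 : Q.mul (Q.wayBelow e x z) (e x s) ≤ ⨆ d, Q.mul (D d) (e z d) :=
        Q.le_res_iff.mp h1
      calc Q.mul (Q.mul (e x y) (Q.wayBelow e x z)) (e y s)
          = Q.mul (Q.wayBelow e x z) (Q.mul (e x y) (e y s)) := by
            rw [Q.mul_comm (e x y), Q.mul_assoc]
        _ ≤ Q.mul (Q.wayBelow e x z) (e x s) := Q.mul_mono_right (htrans x y s)
        _ ≤ _ := h2
    · -- sub(⇓x, ⇓y) ≤ e x y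
      have hsupx := (hcont x).2 y
      rw [hsupx]
      apply le_iInf
      intro z
      refine le_trans (iInf_le _ z) ?_
      apply Q.res_mono_right
      -- ⇓y z ≤ e z y
      have hsupy := (hcont y).2 y
      have h1 : Q.unit ≤ Q.subL (Q.wayBelow e y) (fun t => e t y) := by
        rw [← hsupy]; exact hrefl y
      have h2 : Q.unit ≤ Q.res (Q.wayBelow e y z) (e z y) :=
        le_trans h1 (iInf_le _ z)
      have := Q.le_res_iff.mp h2
      rwa [Q.mul_comm, Q.mul_unit] at this
  refine ⟨?_, key⟩
  intro x y h
  simp only at h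
  have hxy : Q.unit ≤ e x y := by
    rw [key x y, h]
    exact le_iInf fun z => Q.unit_le_res_self _
  have hyx : Q.unit ≤ e y x := by
    rw [key y x, h]
    exact le_iInf fun z => Q.unit_le_res_self _
  exact hanti x y hxy hyx
end

section
/- Let L be a commutative unital quantale and let (P, e) be an algebraic L-dcpo. Then the map x ↦ k(x) is an L-order isomorphism from (P, e) onto ({k(x) | x ∈ P}, sub); that is, it is a bijection onto {k(x) | x ∈ P} and for all x, y ∈ P, e(x, y) = sub(k(x), k(y)). -/
universe u

open CommQuantale in
/-- For an algebraic L-dcpo (P,e), the map x ↦ k(x) is an L-order isomorphism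
onto {k(x) | x ∈ P}: it is injective and e(x,y) = sub(k(x), k(y)). -/
theorem stmt1 {L P : Type u} [CompleteLattice L] (Q : CommQuantale L)
    (e : P → P → L) (hord : Q.IsLOrder e) (hdcpo : Q.IsDcpoL e)
    (halg : ∀ x, Q.IsDirectedL e (Q.kfun e x) ∧ Q.IsSupL e (Q.kfun e x) x) :
    Function.Injective (fun x => Q.kfun e x) ∧
    (∀ x y, e x y = Q.subL (Q.kfun e x) (Q.kfun e y)) := by
  have mul_bot : ∀ a : L, Q.mul a ⊥ = ⊥ := fun a => by
    have := Q.mul_sSup a ∅; simpa using this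
  have res_bot : ∀ c : L, Q.res ⊥ c = ⊤ := fun c => by
    apply top_unique
    apply le_sSup
    simp [Set.mem_setOf_eq, mul_bot]
  have unit_res : ∀ c : L, Q.unit ≤ Q.res c c := fun c => by
    apply le_sSup
    simp [Set.mem_setOf_eq, Q.mul_comm, Q.mul_unit]
  have key : ∀ x y, e x y = Q.subL (Q.kfun e x) (Q.kfun e y) := by
    intro x y
    have h := (halg x).2 y
    rw [h]
    unfold CommQuantale.subL
    congr 1
    funext z
    unfold CommQuantale.kfun
    split_ifs with hz
    · rfl
    · rw [res_bot, res_bot]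
  refine ⟨?_, key⟩
  intro a b hab
  simp only at hab
  have h1 : Q.unit ≤ e a b := by
    rw [key a b, hab]
    unfold CommQuantale.subL
    exact le_iInf fun z => unit_res _
  have h2 : Q.unit ≤ e b a := by
    rw [key b a, hab]
    unfold CommQuantale.subL
    exact le_iInf fun z => unit_res _
  exact hord.2.2 a b h1 h2
end

section
/- Let L be a commutative unital quantale and let (X, ⟨·⟩) be an interpolative generalized L-closure space. Then for every x ∈ X, the L-subset ⟨u_x⟩ is a directed closed set of X, i.e., ⟨u_x⟩ ∈ 𝔠(X). -/
universe u

open CommQuantale in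
lemma aux_mul_bot {L : Type u} [CompleteLattice L] (Q : CommQuantale L) (a : L) :
    Q.mul a ⊥ = ⊥ := by
  have := Q.mul_sSup a ∅
  simpa using this

open CommQuantale in
lemma aux_res_bot {L : Type u} [CompleteLattice L] (Q : CommQuantale L) (c : L) :
    Q.res ⊥ c = ⊤ := by
  apply top_unique
  apply le_sSup
  simp [Set.mem_setOf_eq, aux_mul_bot]

open CommQuantale in
lemma aux_res_unit {L : Type u} [CompleteLattice L] (Q : CommQuantale L) (c : L) :
    Q.res Q.unit c = c := by
  apply le_antisymm
  · apply sSup_le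
    intro a ha
    simpa [Q.mul_unit] using ha
  · apply le_sSup
    simp [Set.mem_setOf_eq, Q.mul_unit]

open CommQuantale in
lemma aux_subL_ux {L X : Type u} [CompleteLattice L] (Q : CommQuantale L) (t : X)
    (A : X → L) : Q.subL (Q.ux t) A = A t := by
  apply le_antisymm
  · refine le_trans (iInf_le _ t) ?_
    simp [ux, aux_res_unit]
  · apply le_iInf
    intro y
    by_cases h : y = t
    · subst h; simp [ux, aux_res_unit]
    · simp [ux, h, aux_res_bot]

open CommQuantale in
lemma aux_res_mono {L : Type u} [CompleteLattice L] (Q : CommQuantale L) {b c c' : L}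
    (h : c ≤ c') : Q.res b c ≤ Q.res b c' := by
  apply sSup_le_sSup
  intro a ha
  exact le_trans ha h

open CommQuantale in
/-- In an interpolative generalized L-closure space,
⟨u_x⟩ is a directed closed set for every x. -/
theorem stmt3 {L X : Type u} [CompleteLattice L] (Q : CommQuantale L)
    (cl : (X → L) → (X → L)) (hgc : Q.IsGenClosure cl) (hint : Q.IsInterpolative cl) :
    ∀ x : X, Q.IsDirClosed cl (cl (Q.ux x)) := by
  obtain ⟨hgc1, hgc2⟩ := hgc
  obtain ⟨hi1, hi2, hi3⟩ := hint
  intro x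
  refine ⟨hi1 x, ?_, fun y => hi2 x y, fun a b => hi3 x a b⟩
  intro t
  have h1 : cl (Q.ux x) t = Q.subL (Q.ux t) (cl (Q.ux x)) := (aux_subL_ux Q t _).symm
  have h2 : Q.subL (Q.ux t) (cl (Q.ux x)) ≤ Q.subL (cl (Q.ux t)) (cl (cl (Q.ux x))) :=
    hgc1 _ _
  have h3 : Q.subL (cl (Q.ux t)) (cl (cl (Q.ux x))) ≤ Q.subL (cl (Q.ux t)) (cl (Q.ux x)) :=
    iInf_mono fun y => aux_res_mono Q (hgc2 (Q.ux x) y)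
  calc cl (Q.ux x) t = Q.subL (Q.ux t) (cl (Q.ux x)) := h1
    _ ≤ _ := le_trans h2 h3
end

section
/- Let L be a commutative unital quantale, let (X, ⟨·⟩) be an interpolative generalized L-closure space, and let 𝒟 be a directed L-subset of the L-ordered set (𝔠(X), sub). Then the pointwise join ⋁_{U∈𝔠(X)} 𝒟(U) ⊗ U is again a directed closed set, i.e., it belongs to 𝔠(X). -/
universe u

namespace CommQuantale
variable {L : Type u} [CompleteLattice L]

lemma mul_iSup (Q : CommQuantale L) {ι : Sort*} (a : L) (f : ι → L) :
    Q.mul a (⨆ i, f i) = ⨆ i, Q.mul a (f i) := by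
  rw [← sSup_range, Q.mul_sSup, iSup_range]

lemma iSup_mul (Q : CommQuantale L) {ι : Sort*} (a : L) (f : ι → L) :
    Q.mul (⨆ i, f i) a = ⨆ i, Q.mul (f i) a := by
  rw [Q.mul_comm, Q.mul_iSup]
  exact iSup_congr fun i => Q.mul_comm a (f i)

lemma mul_le_mul_left (Q : CommQuantale L) {a b : L} (c : L) (h : a ≤ b) :
    Q.mul c a ≤ Q.mul c b := by
  have hb : sSup ({a, b} : Set L) = b := by rw [sSup_pair, sup_eq_right.mpr h]
  calc Q.mul c a ≤ ⨆ s ∈ ({a, b} : Set L), Q.mul c s :=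
        le_iSup₂ (f := fun s (_ : s ∈ ({a, b} : Set L)) => Q.mul c s) a (by simp)
    _ = Q.mul c (sSup {a, b}) := (Q.mul_sSup c _).symm
    _ = Q.mul c b := by rw [hb]

lemma mul_le_mul_right (Q : CommQuantale L) {a b : L} (c : L) (h : a ≤ b) :
    Q.mul a c ≤ Q.mul b c := by
  rw [Q.mul_comm a c, Q.mul_comm b c]; exact Q.mul_le_mul_left c h

lemma mul_le_mul' (Q : CommQuantale L) {a b c d : L} (h1 : a ≤ b) (h2 : c ≤ d) :
    Q.mul a c ≤ Q.mul b d :=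
  le_trans (Q.mul_le_mul_right c h1) (Q.mul_le_mul_left b h2)

lemma res_mul (Q : CommQuantale L) (b c : L) : Q.mul (Q.res b c) b ≤ c := by
  rw [Q.mul_comm, res, Q.mul_sSup]
  exact iSup₂_le fun a ha => by rw [Q.mul_comm]; exact ha

lemma le_res (Q : CommQuantale L) {a b c : L} (h : Q.mul a b ≤ c) : a ≤ Q.res b c :=
  le_sSup h

lemma subL_mul (Q : CommQuantale L) {X : Type u} (A B : X → L) (x : X) :
    Q.mul (Q.subL A B) (A x) ≤ B x :=
  le_trans (Q.mul_le_mul_right (A x) (iInf_le _ x)) (Q.res_mul _ _)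

lemma mul_mul_mul_comm (Q : CommQuantale L) (a b c d : L) :
    Q.mul (Q.mul a b) (Q.mul c d) = Q.mul (Q.mul a c) (Q.mul b d) := by
  rw [Q.mul_assoc, ← Q.mul_assoc b, Q.mul_comm b c, Q.mul_assoc c, ← Q.mul_assoc]

end CommQuantale

open CommQuantale in
/-- In an interpolative generalized L-closure space, the pointwise join
⋁_{U ∈ 𝔠(X)} 𝒟(U) ⊗ U of a directed L-subset 𝒟 of (𝔠(X), sub) is again a
directed closed set. -/
theorem stmt4 {L X : Type u} [CompleteLattice L] (Q : CommQuantale L)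
    (cl : (X → L) → (X → L)) (hgc : Q.IsGenClosure cl) (hint : Q.IsInterpolative cl)
    (𝒟 : {U : X → L // Q.IsDirClosed cl U} → L)
    (hdir : Q.IsDirectedL
      (fun U V : {U : X → L // Q.IsDirClosed cl U} => Q.subL U.1 V.1) 𝒟) :
    Q.IsDirClosed cl
      (fun x => ⨆ U : {U : X → L // Q.IsDirClosed cl U}, Q.mul (𝒟 U) (U.1 x)) := by
  refine ⟨?_, ?_, ?_, ?_⟩
  · -- DC1
    calc Q.unit ≤ ⨆ U : {U : X → L // Q.IsDirClosed cl U}, 𝒟 U := hdir.1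
      _ ≤ ⨆ U : {U : X → L // Q.IsDirClosed cl U}, ⨆ x, Q.mul (𝒟 U) (U.1 x) := by
          refine iSup_mono fun U => ?_
          rw [← Q.mul_iSup]
          calc 𝒟 U = Q.mul (𝒟 U) Q.unit := (Q.mul_unit _).symm
            _ ≤ Q.mul (𝒟 U) (⨆ x, U.1 x) := Q.mul_le_mul_left _ U.2.1
      _ ≤ ⨆ x, ⨆ U : {U : X → L // Q.IsDirClosed cl U}, Q.mul (𝒟 U) (U.1 x) := by
          refine iSup_le fun U => iSup_le fun x => ?_
          exact le_trans (le_iSup (fun U : {U : X → L // Q.IsDirClosed cl U} => Q.mul (𝒟 U) (U.1 x)) U)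
            (le_iSup (fun x => ⨆ U : {U : X → L // Q.IsDirClosed cl U}, Q.mul (𝒟 U) (U.1 x)) x)
  · -- DC2
    intro x
    refine le_iInf fun y => Q.le_res ?_
    rw [Q.iSup_mul]
    refine iSup_le fun U => ?_
    calc Q.mul (Q.mul (𝒟 U) (U.1 x)) (cl (Q.ux x) y)
        = Q.mul (𝒟 U) (Q.mul (U.1 x) (cl (Q.ux x) y)) := Q.mul_assoc _ _ _
      _ ≤ Q.mul (𝒟 U) (U.1 y) := by
          refine Q.mul_le_mul_left _ ?_
          exact le_trans (Q.mul_le_mul_right _ (U.2.2.1 x)) (Q.subL_mul _ _ y)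
      _ ≤ (⨆ W : {U : X → L // Q.IsDirClosed cl U}, Q.mul (𝒟 W) (W.1 y)) := le_iSup (fun W : {U : X → L // Q.IsDirClosed cl U} => Q.mul (𝒟 W) (W.1 y)) U
  · -- DC3
    intro x
    refine iSup_le fun U => ?_
    calc Q.mul (𝒟 U) (U.1 x)
        ≤ Q.mul (𝒟 U) (⨆ y, Q.mul (U.1 y) (cl (Q.ux y) x)) :=
          Q.mul_le_mul_left _ (U.2.2.2.1 x)
      _ = ⨆ y, Q.mul (𝒟 U) (Q.mul (U.1 y) (cl (Q.ux y) x)) := Q.mul_iSup _ _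
      _ ≤ ⨆ y, Q.mul (⨆ W : {U : X → L // Q.IsDirClosed cl U}, Q.mul (𝒟 W) (W.1 y)) (cl (Q.ux y) x) := by
          refine iSup_mono fun y => ?_
          rw [← Q.mul_assoc]
          exact Q.mul_le_mul_right _ (le_iSup (fun W : {U : X → L // Q.IsDirClosed cl U} => Q.mul (𝒟 W) (W.1 y)) U)
  · -- DC4
    intro x y
    rw [Q.iSup_mul]
    refine iSup_le fun U => ?_
    rw [Q.mul_iSup]
    refine iSup_le fun V => ?_
    calc Q.mul (Q.mul (𝒟 U) (U.1 x)) (Q.mul (𝒟 V) (V.1 y))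
        = Q.mul (Q.mul (𝒟 U) (𝒟 V)) (Q.mul (U.1 x) (V.1 y)) :=
          Q.mul_mul_mul_comm _ _ _ _
      _ ≤ Q.mul (⨆ W : {U : X → L // Q.IsDirClosed cl U}, Q.mul (Q.mul (𝒟 W) (Q.subL U.1 W.1)) (Q.subL V.1 W.1))
            (Q.mul (U.1 x) (V.1 y)) := Q.mul_le_mul_right _ (hdir.2 U V)
      _ = ⨆ W : {U : X → L // Q.IsDirClosed cl U}, Q.mul (Q.mul (Q.mul (𝒟 W) (Q.subL U.1 W.1)) (Q.subL V.1 W.1))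
            (Q.mul (U.1 x) (V.1 y)) := Q.iSup_mul _ _
      _ ≤ ⨆ z, Q.mul (Q.mul (⨆ W : {U : X → L // Q.IsDirClosed cl U}, Q.mul (𝒟 W) (W.1 z)) (cl (Q.ux z) x)) (cl (Q.ux z) y) := by
          refine iSup_le fun W => ?_
          calc Q.mul (Q.mul (Q.mul (𝒟 W) (Q.subL U.1 W.1)) (Q.subL V.1 W.1))
                (Q.mul (U.1 x) (V.1 y))
              = Q.mul (𝒟 W) (Q.mul (Q.mul (Q.subL U.1 W.1) (U.1 x))
                  (Q.mul (Q.subL V.1 W.1) (V.1 y))) := by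
                rw [Q.mul_assoc (𝒟 W), Q.mul_assoc, Q.mul_mul_mul_comm]
            _ ≤ Q.mul (𝒟 W) (Q.mul (W.1 x) (W.1 y)) :=
                Q.mul_le_mul_left _ (Q.mul_le_mul' (Q.subL_mul _ _ x) (Q.subL_mul _ _ y))
            _ ≤ Q.mul (𝒟 W) (⨆ z, Q.mul (Q.mul (W.1 z) (cl (Q.ux z) x)) (cl (Q.ux z) y)) :=
                Q.mul_le_mul_left _ (W.2.2.2.2 x y)
            _ = ⨆ z, Q.mul (𝒟 W) (Q.mul (Q.mul (W.1 z) (cl (Q.ux z) x)) (cl (Q.ux z) y)) :=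
                Q.mul_iSup _ _
            _ ≤ ⨆ z, Q.mul (Q.mul (⨆ W : {U : X → L // Q.IsDirClosed cl U}, Q.mul (𝒟 W) (W.1 z)) (cl (Q.ux z) x)) (cl (Q.ux z) y) := by
                refine iSup_mono fun z => ?_
                rw [← Q.mul_assoc, ← Q.mul_assoc]
                refine Q.mul_le_mul_right _ (Q.mul_le_mul_right _ ?_)
                exact le_iSup (fun W : {U : X → L // Q.IsDirClosed cl U} => Q.mul (𝒟 W) (W.1 z)) W
end

section
/- Let L be a commutative unital quantale and let (X, ⟨·⟩) be an interpolative generalized L-closure space. Then the L-ordered set (𝔠(X), sub) of directed closed sets of X is a continuous L-dcpo. -/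
universe u

namespace Stmt7Aux
open CommQuantale

variable {L : Type u} [CompleteLattice L] (Q : CommQuantale L)

theorem q_mul_iSup {ι : Sort*} (a : L) (f : ι → L) :
    Q.mul a (⨆ i, f i) = ⨆ i, Q.mul a (f i) := by
  rw [← sSup_range, Q.mul_sSup, iSup_range]

theorem q_iSup_mul {ι : Sort*} (a : L) (f : ι → L) :
    Q.mul (⨆ i, f i) a = ⨆ i, Q.mul (f i) a := by
  rw [Q.mul_comm, q_mul_iSup]
  exact iSup_congr fun i => Q.mul_comm a (f i)

theorem q_mul_bot (a : L) : Q.mul a ⊥ = ⊥ := by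
  rw [← sSup_empty, Q.mul_sSup]; simp

theorem q_mul_mono {a b c d : L} (h1 : a ≤ b) (h2 : c ≤ d) : Q.mul a c ≤ Q.mul b d := by
  have key : ∀ x y z : L, y ≤ z → Q.mul x y ≤ Q.mul x z := by
    intro x y z h
    have := Q.mul_sSup x {y, z}
    rw [sSup_pair, sup_eq_right.2 h] at this
    rw [this]
    simp only [Set.mem_insert_iff, Set.mem_singleton_iff, iSup_le_iff]
    exact le_biSup _ (Or.inl rfl)
  calc Q.mul a c ≤ Q.mul a d := key a c d h2
    _ = Q.mul d a := Q.mul_comm a d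
    _ ≤ Q.mul d b := key d a b h1
    _ = Q.mul b d := Q.mul_comm d b

theorem q_res_mul_le (b c : L) : Q.mul (Q.res b c) b ≤ c := by
  rw [Q.mul_comm, res, Q.mul_sSup]
  exact iSup₂_le fun s hs => le_of_eq_of_le (Q.mul_comm b s) hs

theorem q_le_res {a b c : L} : a ≤ Q.res b c ↔ Q.mul a b ≤ c := by
  constructor
  · intro h
    exact le_trans (q_mul_mono Q h le_rfl) (q_res_mul_le Q b c)
  · intro h
    exact le_sSup h

theorem q_unit_mul (a : L) : Q.mul Q.unit a = a := by
  rw [Q.mul_comm]; exact Q.mul_unit a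

theorem q_res_unit (c : L) : Q.res Q.unit c = c := by
  apply le_antisymm
  · have := q_res_mul_le Q Q.unit c
    rwa [Q.mul_unit] at this
  · rw [q_le_res, Q.mul_unit]

theorem q_res_mono {b b' c c' : L} (hb : b' ≤ b) (hc : c ≤ c') : Q.res b c ≤ Q.res b' c' := by
  rw [q_le_res]
  exact le_trans (q_mul_mono Q le_rfl hb) (le_trans (q_res_mul_le Q b c) hc)

theorem q_res_iSup_left {ι : Sort*} (f : ι → L) (c : L) :
    Q.res (⨆ i, f i) c = ⨅ i, Q.res (f i) c := by
  apply eq_of_forall_le_iff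
  intro d
  rw [q_le_res, q_mul_iSup, iSup_le_iff, le_iInf_iff]
  exact forall_congr' fun i => (q_le_res Q).symm

theorem q_res_iInf_right {ι : Sort*} (b : L) (f : ι → L) :
    Q.res b (⨅ i, f i) = ⨅ i, Q.res b (f i) := by
  apply eq_of_forall_le_iff
  intro d
  rw [q_le_res, le_iInf_iff, le_iInf_iff]
  exact forall_congr' fun i => (q_le_res Q).symm

theorem q_res_mul_left (b b' c : L) : Q.res (Q.mul b b') c = Q.res b (Q.res b' c) := by
  apply eq_of_forall_le_iff
  intro d
  rw [q_le_res, q_le_res, q_le_res, ← Q.mul_assoc]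

variable {X : Type u}

theorem q_le_subL {a : L} {A B : X → L} : a ≤ Q.subL A B ↔ ∀ x, Q.mul a (A x) ≤ B x := by
  rw [subL, le_iInf_iff]
  exact forall_congr' fun x => q_le_res Q

theorem q_subL_refl (A : X → L) : Q.unit ≤ Q.subL A A := by
  rw [q_le_subL]; intro x; rw [q_unit_mul]

theorem q_subL_mul_le (A B : X → L) (x : X) : Q.mul (Q.subL A B) (A x) ≤ B x :=
  (q_le_subL Q).1 le_rfl x

theorem q_subL_trans (A B C : X → L) :
    Q.mul (Q.subL A B) (Q.subL B C) ≤ Q.subL A C := by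
  rw [q_le_subL]
  intro x
  calc Q.mul (Q.mul (Q.subL A B) (Q.subL B C)) (A x)
      = Q.mul (Q.subL B C) (Q.mul (Q.subL A B) (A x)) := by
        rw [Q.mul_comm (Q.subL A B) (Q.subL B C), Q.mul_assoc]
    _ ≤ Q.mul (Q.subL B C) (B x) := q_mul_mono Q le_rfl (q_subL_mul_le Q A B x)
    _ ≤ C x := q_subL_mul_le Q B C x

theorem q_subL_mono {A B B' : X → L} (h : ∀ x, B x ≤ B' x) : Q.subL A B ≤ Q.subL A B' :=
  iInf_mono fun x => q_res_mono Q le_rfl (h x)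

theorem q_subL_apply_le (A B : X → L) (x : X) : Q.subL A B ≤ Q.res (A x) (B x) := iInf_le _ x

theorem q_le_of_unit_le_subL {A B : X → L} (h : Q.unit ≤ Q.subL A B) (x : X) : A x ≤ B x := by
  calc A x = Q.mul Q.unit (A x) := (q_unit_mul Q _).symm
    _ ≤ Q.mul (Q.subL A B) (A x) := q_mul_mono Q h le_rfl
    _ ≤ B x := q_subL_mul_le Q A B x

theorem q_subL_ux (x : X) (A : X → L) : Q.subL (Q.ux x) A = A x := by
  apply le_antisymm
  · refine le_trans (q_subL_apply_le Q _ _ x) ?_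
    simp [ux, q_res_unit]
  · rw [q_le_subL]
    intro y
    by_cases h : y = x
    · subst h; simp [ux, Q.mul_unit]
    · simp [ux, h, q_mul_bot]

theorem q_subL_wsum {ι : Type u} (D : ι → L) (F : ι → X → L) (Z : X → L) :
    Q.subL (fun x => ⨆ i, Q.mul (D i) (F i x)) Z = ⨅ i, Q.res (D i) (Q.subL (F i) Z) := by
  unfold subL
  simp_rw [q_res_iSup_left, q_res_mul_left, q_res_iInf_right]
  exact iInf_comm

theorem q_mul_subL (a : L) (A B : X → L) :
    Q.mul a (Q.subL A B) ≤ Q.subL A (fun y => Q.mul a (B y)) := by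
  rw [q_le_subL]
  intro y
  calc Q.mul (Q.mul a (Q.subL A B)) (A y)
      = Q.mul a (Q.mul (Q.subL A B) (A y)) := Q.mul_assoc _ _ _
    _ ≤ Q.mul a (B y) := q_mul_mono Q le_rfl (q_subL_mul_le Q A B y)

instance instAssocQ (Q : CommQuantale L) : Std.Associative Q.mul := ⟨Q.mul_assoc⟩
instance instCommQ (Q : CommQuantale L) : Std.Commutative Q.mul := ⟨Q.mul_comm⟩

variable (cl : (X → L) → (X → L))

/-- The set of directed closed sets. -/
abbrev Pt : Type u := {U : X → L // Q.IsDirClosed cl U}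

/-- The L-order on directed closed sets. -/
def eo : Pt Q cl → Pt Q cl → L := fun U V => Q.subL U.1 V.1

theorem eo_order : Q.IsLOrder (eo Q cl) :=
  ⟨fun U => q_subL_refl Q U.1,
   fun U V W => q_subL_trans Q U.1 V.1 W.1,
   fun U V h1 h2 => Subtype.ext (funext fun x =>
     le_antisymm (q_le_of_unit_le_subL Q h1 x) (q_le_of_unit_le_subL Q h2 x))⟩

theorem Cx_closed (hgc : Q.IsGenClosure cl) (hint : Q.IsInterpolative cl) (x : X) :
    Q.IsDirClosed cl (cl (Q.ux x)) := by
  refine ⟨hint.1 x, ?_, hint.2.1 x, hint.2.2 x⟩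
  intro y
  calc cl (Q.ux x) y = Q.subL (Q.ux y) (cl (Q.ux x)) := (q_subL_ux Q y _).symm
    _ ≤ Q.subL (cl (Q.ux y)) (cl (cl (Q.ux x))) := hgc.1 _ _
    _ ≤ Q.subL (cl (Q.ux y)) (cl (Q.ux x)) := q_subL_mono Q (fun z => hgc.2 _ z)

/-- The basic closed set generated by a point. -/
noncomputable def Cx (hgc : Q.IsGenClosure cl) (hint : Q.IsInterpolative cl) (x : X) :
    Pt Q cl := ⟨cl (Q.ux x), Cx_closed Q cl hgc hint x⟩

/-- Weighted union of a family of directed closed sets. -/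
def VD (D : Pt Q cl → L) : X → L := fun x => ⨆ W : Pt Q cl, Q.mul (D W) (W.1 x)

theorem VD_subL (D : Pt Q cl → L) (Z : X → L) :
    Q.subL (VD Q cl D) Z = Q.subL D (fun W => Q.subL W.1 Z) :=
  q_subL_wsum Q D (fun W => W.1) Z

theorem VD_closed {D : Pt Q cl → L} (hD : Q.IsDirectedL (eo Q cl) D) :
    Q.IsDirClosed cl (VD Q cl D) := by
  obtain ⟨hD1, hD2⟩ := hD
  refine ⟨?_, ?_, ?_, ?_⟩
  · calc Q.unit ≤ ⨆ W, D W := hD1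
      _ ≤ ⨆ x, VD Q cl D x := by
        apply iSup_le; intro W
        have h1 : D W ≤ ⨆ x, Q.mul (D W) (W.1 x) := by
          rw [← q_mul_iSup]
          calc D W = Q.mul (D W) Q.unit := (Q.mul_unit _).symm
            _ ≤ Q.mul (D W) (⨆ x, W.1 x) := q_mul_mono Q le_rfl W.2.1
        refine le_trans h1 (iSup_le fun x => ?_)
        exact le_trans (le_iSup (fun W' : Pt Q cl => Q.mul (D W') (W'.1 x)) W) (le_iSup (VD Q cl D) x)
  · intro x
    apply iSup_le; intro W
    calc Q.mul (D W) (W.1 x)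
        ≤ Q.mul (D W) (Q.subL (cl (Q.ux x)) W.1) := q_mul_mono Q le_rfl (W.2.2.1 x)
      _ ≤ Q.subL (cl (Q.ux x)) (fun y => Q.mul (D W) (W.1 y)) := q_mul_subL Q _ _ _
      _ ≤ Q.subL (cl (Q.ux x)) (VD Q cl D) := q_subL_mono Q (fun y =>
          le_iSup (fun W' : Pt Q cl => Q.mul (D W') (W'.1 y)) W)
  · intro x
    apply iSup_le; intro W
    calc Q.mul (D W) (W.1 x)
        ≤ Q.mul (D W) (⨆ y, Q.mul (W.1 y) (cl (Q.ux y) x)) := q_mul_mono Q le_rfl (W.2.2.2.1 x)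
      _ = ⨆ y, Q.mul (D W) (Q.mul (W.1 y) (cl (Q.ux y) x)) := q_mul_iSup Q _ _
      _ ≤ ⨆ y, Q.mul (VD Q cl D y) (cl (Q.ux y) x) := by
          apply iSup_mono; intro y
          calc Q.mul (D W) (Q.mul (W.1 y) (cl (Q.ux y) x))
              = Q.mul (Q.mul (D W) (W.1 y)) (cl (Q.ux y) x) := (Q.mul_assoc _ _ _).symm
            _ ≤ Q.mul (VD Q cl D y) (cl (Q.ux y) x) := q_mul_mono Q
                (le_iSup (fun W' : Pt Q cl => Q.mul (D W') (W'.1 y)) W) le_rfl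
  · intro x y
    rw [show VD Q cl D x = ⨆ W : Pt Q cl, Q.mul (D W) (W.1 x) from rfl, q_iSup_mul]
    apply iSup_le; intro W
    rw [show VD Q cl D y = ⨆ W' : Pt Q cl, Q.mul (D W') (W'.1 y) from rfl, q_mul_iSup]
    apply iSup_le; intro W'
    calc Q.mul (Q.mul (D W) (W.1 x)) (Q.mul (D W') (W'.1 y))
        = Q.mul (Q.mul (D W) (D W')) (Q.mul (W.1 x) (W'.1 y)) := by ac_rfl
      _ ≤ Q.mul (⨆ Z, Q.mul (Q.mul (D Z) (eo Q cl W Z)) (eo Q cl W' Z))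
            (Q.mul (W.1 x) (W'.1 y)) := q_mul_mono Q (hD2 W W') le_rfl
      _ = ⨆ Z, Q.mul (Q.mul (Q.mul (D Z) (eo Q cl W Z)) (eo Q cl W' Z))
            (Q.mul (W.1 x) (W'.1 y)) := q_iSup_mul Q _ _
      _ ≤ ⨆ z, Q.mul (Q.mul (VD Q cl D z) (cl (Q.ux z) x)) (cl (Q.ux z) y) := ?_
    apply iSup_le; intro Z
    calc Q.mul (Q.mul (Q.mul (D Z) (eo Q cl W Z)) (eo Q cl W' Z)) (Q.mul (W.1 x) (W'.1 y))
        = Q.mul (D Z) (Q.mul (Q.mul (eo Q cl W Z) (W.1 x)) (Q.mul (eo Q cl W' Z) (W'.1 y))) := by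
          ac_rfl
      _ ≤ Q.mul (D Z) (Q.mul (Z.1 x) (Z.1 y)) := by
          refine q_mul_mono Q le_rfl (q_mul_mono Q ?_ ?_)
          · calc Q.mul (eo Q cl W Z) (W.1 x) = Q.mul (Q.subL W.1 Z.1) (W.1 x) := rfl
              _ ≤ Z.1 x := q_subL_mul_le Q _ _ _
          · calc Q.mul (eo Q cl W' Z) (W'.1 y) = Q.mul (Q.subL W'.1 Z.1) (W'.1 y) := rfl
              _ ≤ Z.1 y := q_subL_mul_le Q _ _ _
      _ ≤ Q.mul (D Z) (⨆ z, Q.mul (Q.mul (Z.1 z) (cl (Q.ux z) x)) (cl (Q.ux z) y)) :=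
          q_mul_mono Q le_rfl (Z.2.2.2.2 x y)
      _ = ⨆ z, Q.mul (D Z) (Q.mul (Q.mul (Z.1 z) (cl (Q.ux z) x)) (cl (Q.ux z) y)) :=
          q_mul_iSup Q _ _
      _ ≤ ⨆ z, Q.mul (Q.mul (VD Q cl D z) (cl (Q.ux z) x)) (cl (Q.ux z) y) := by
          apply iSup_mono; intro z
          calc Q.mul (D Z) (Q.mul (Q.mul (Z.1 z) (cl (Q.ux z) x)) (cl (Q.ux z) y))
              = Q.mul (Q.mul (Q.mul (D Z) (Z.1 z)) (cl (Q.ux z) x)) (cl (Q.ux z) y) := by ac_rfl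
            _ ≤ Q.mul (Q.mul (VD Q cl D z) (cl (Q.ux z) x)) (cl (Q.ux z) y) :=
                q_mul_mono Q (q_mul_mono Q
                  (le_iSup (fun W'' : Pt Q cl => Q.mul (D W'') (W''.1 z)) Z) le_rfl) le_rfl

theorem eo_dcpo : Q.IsDcpoL (eo Q cl) := by
  intro D hD
  exact ⟨⟨VD Q cl D, VD_closed Q cl hD⟩, fun W => VD_subL Q cl D W.1⟩

theorem sup_le_VD {D : Pt Q cl → L} (hD : Q.IsDirectedL (eo Q cl) D) {s : Pt Q cl}
    (hs : Q.IsSupL (eo Q cl) D s) (x : X) : s.1 x ≤ VD Q cl D x := by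
  have h := hs ⟨VD Q cl D, VD_closed Q cl hD⟩
  have h2 : Q.unit ≤ Q.subL s.1 (VD Q cl D) := by
    calc Q.unit ≤ Q.subL (VD Q cl D) (VD Q cl D) := q_subL_refl Q _
      _ = Q.subL D (fun W => Q.subL W.1 (VD Q cl D)) := VD_subL Q cl D _
      _ = Q.subL s.1 (VD Q cl D) := h.symm
  exact q_le_of_unit_le_subL Q h2 x

theorem q_absorb (U : Pt Q cl) (V : X → L) (x : X) :
    Q.mul (U.1 x) (Q.subL V (cl (Q.ux x))) ≤ Q.subL V U.1 := by
  rw [q_le_subL]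
  intro y
  calc Q.mul (Q.mul (U.1 x) (Q.subL V (cl (Q.ux x)))) (V y)
      = Q.mul (U.1 x) (Q.mul (Q.subL V (cl (Q.ux x))) (V y)) := Q.mul_assoc _ _ _
    _ ≤ Q.mul (U.1 x) (cl (Q.ux x) y) := q_mul_mono Q le_rfl (q_subL_mul_le Q _ _ y)
    _ ≤ Q.mul (Q.subL (cl (Q.ux x)) U.1) (cl (Q.ux x) y) := q_mul_mono Q (U.2.2.1 x) le_rfl
    _ ≤ U.1 y := q_subL_mul_le Q _ _ y

theorem dc3_pattern (U W : Pt Q cl) (c : L)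
    (hc : ∀ x, Q.mul c (U.1 x) ≤ Q.subL (cl (Q.ux x)) W.1) : c ≤ Q.subL U.1 W.1 := by
  rw [q_le_subL]
  intro y
  calc Q.mul c (U.1 y)
      ≤ Q.mul c (⨆ x, Q.mul (U.1 x) (cl (Q.ux x) y)) := q_mul_mono Q le_rfl (U.2.2.2.1 y)
    _ = ⨆ x, Q.mul c (Q.mul (U.1 x) (cl (Q.ux x) y)) := q_mul_iSup Q _ _
    _ ≤ W.1 y := iSup_le fun x => by
        calc Q.mul c (Q.mul (U.1 x) (cl (Q.ux x) y))
            = Q.mul (Q.mul c (U.1 x)) (cl (Q.ux x) y) := (Q.mul_assoc _ _ _).symm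
          _ ≤ Q.mul (Q.subL (cl (Q.ux x)) W.1) (cl (Q.ux x) y) := q_mul_mono Q (hc x) le_rfl
          _ ≤ W.1 y := q_subL_mul_le Q _ _ y

theorem claim_a (hgc : Q.IsGenClosure cl) (hint : Q.IsInterpolative cl)
    (U : Pt Q cl) (x : X) :
    U.1 x ≤ Q.wayBelow (eo Q cl) U (Cx Q cl hgc hint x) := by
  show U.1 x ≤ ⨅ (D : Pt Q cl → L) (_ : Q.IsDirectedL (eo Q cl) D) (s : Pt Q cl)
      (_ : Q.IsSupL (eo Q cl) D s),
      Q.res (eo Q cl U s) (⨆ d, Q.mul (D d) (eo Q cl (Cx Q cl hgc hint x) d))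
  refine le_iInf fun D => le_iInf fun hD => le_iInf fun s => le_iInf fun hs => ?_
  rw [q_le_res]
  calc Q.mul (U.1 x) (eo Q cl U s)
      = Q.mul (Q.subL U.1 s.1) (U.1 x) := Q.mul_comm _ _
    _ ≤ s.1 x := q_subL_mul_le Q _ _ x
    _ ≤ VD Q cl D x := sup_le_VD Q cl hD hs x
    _ ≤ ⨆ W : Pt Q cl, Q.mul (D W) (Q.subL (cl (Q.ux x)) W.1) :=
        iSup_mono fun W => q_mul_mono Q le_rfl (W.2.2.1 x)

/-- The canonical directed family of approximants of `U`. -/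
noncomputable def Dstar (U : Pt Q cl) : Pt Q cl → L :=
  fun W => ⨆ x, Q.mul (U.1 x) (Q.subL W.1 (cl (Q.ux x)))

theorem Dstar_le_eo (U V : Pt Q cl) : Dstar Q cl U V ≤ Q.subL V.1 U.1 :=
  iSup_le fun x => q_absorb Q cl U V.1 x

theorem le_Dstar_Cx (hgc : Q.IsGenClosure cl) (hint : Q.IsInterpolative cl)
    (U : Pt Q cl) (x : X) : U.1 x ≤ Dstar Q cl U (Cx Q cl hgc hint x) := by
  refine le_trans ?_
    (le_iSup (fun x' => Q.mul (U.1 x') (Q.subL (cl (Q.ux x)) (cl (Q.ux x')))) x)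
  calc U.1 x = Q.mul (U.1 x) Q.unit := (Q.mul_unit _).symm
    _ ≤ Q.mul (U.1 x) (Q.subL (cl (Q.ux x)) (cl (Q.ux x))) :=
        q_mul_mono Q le_rfl (q_subL_refl Q _)

theorem sup_core (hgc : Q.IsGenClosure cl) (hint : Q.IsInterpolative cl)
    (U : Pt Q cl) (G : Pt Q cl → L)
    (hG1 : ∀ x, U.1 x ≤ G (Cx Q cl hgc hint x))
    (hG2 : ∀ V, G V ≤ Q.subL V.1 U.1) :
    Q.IsSupL (eo Q cl) G U := by
  intro W
  apply le_antisymm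
  · show Q.subL U.1 W.1 ≤ ⨅ V : Pt Q cl, Q.res (G V) (Q.subL V.1 W.1)
    refine le_iInf fun V => ?_
    rw [q_le_res]
    calc Q.mul (Q.subL U.1 W.1) (G V)
        ≤ Q.mul (Q.subL U.1 W.1) (Q.subL V.1 U.1) := q_mul_mono Q le_rfl (hG2 V)
      _ = Q.mul (Q.subL V.1 U.1) (Q.subL U.1 W.1) := Q.mul_comm _ _
      _ ≤ Q.subL V.1 W.1 := q_subL_trans Q _ _ _
  · refine dc3_pattern Q cl U W _ fun x => ?_
    calc Q.mul (Q.subL G fun V => eo Q cl V W) (U.1 x)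
        ≤ Q.mul (Q.res (G (Cx Q cl hgc hint x)) (Q.subL (cl (Q.ux x)) W.1))
            (G (Cx Q cl hgc hint x)) :=
          q_mul_mono Q (q_subL_apply_le Q G _ (Cx Q cl hgc hint x)) (hG1 x)
      _ ≤ Q.subL (cl (Q.ux x)) W.1 := q_res_mul_le Q _ _

theorem directed_core (hgc : Q.IsGenClosure cl) (hint : Q.IsInterpolative cl)
    (U V V' : Pt Q cl) (G : Pt Q cl → L)
    (hG : ∀ z, U.1 z ≤ G (Cx Q cl hgc hint z)) :
    Q.mul (Dstar Q cl U V) (Dstar Q cl U V') ≤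
      ⨆ Z, Q.mul (Q.mul (G Z) (eo Q cl V Z)) (eo Q cl V' Z) := by
  show Q.mul (⨆ x, Q.mul (U.1 x) (Q.subL V.1 (cl (Q.ux x))))
      (⨆ y, Q.mul (U.1 y) (Q.subL V'.1 (cl (Q.ux y)))) ≤ _
  rw [q_iSup_mul]
  refine iSup_le fun x => ?_
  rw [q_mul_iSup]
  refine iSup_le fun y => ?_
  calc Q.mul (Q.mul (U.1 x) (Q.subL V.1 (cl (Q.ux x))))
        (Q.mul (U.1 y) (Q.subL V'.1 (cl (Q.ux y))))
      = Q.mul (Q.mul (U.1 x) (U.1 y))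
          (Q.mul (Q.subL V.1 (cl (Q.ux x))) (Q.subL V'.1 (cl (Q.ux y)))) := by ac_rfl
    _ ≤ Q.mul (⨆ z, Q.mul (Q.mul (U.1 z) (cl (Q.ux z) x)) (cl (Q.ux z) y))
          (Q.mul (Q.subL V.1 (cl (Q.ux x))) (Q.subL V'.1 (cl (Q.ux y)))) :=
        q_mul_mono Q (U.2.2.2.2 x y) le_rfl
    _ = ⨆ z, Q.mul (Q.mul (Q.mul (U.1 z) (cl (Q.ux z) x)) (cl (Q.ux z) y))
          (Q.mul (Q.subL V.1 (cl (Q.ux x))) (Q.subL V'.1 (cl (Q.ux y)))) := q_iSup_mul Q _ _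
    _ ≤ ⨆ Z, Q.mul (Q.mul (G Z) (eo Q cl V Z)) (eo Q cl V' Z) := ?_
  refine iSup_le fun z => ?_
  have hx : Q.mul (Q.subL V.1 (cl (Q.ux x))) (cl (Q.ux z) x) ≤ Q.subL V.1 (cl (Q.ux z)) := by
    calc Q.mul (Q.subL V.1 (cl (Q.ux x))) (cl (Q.ux z) x)
        ≤ Q.mul (Q.subL V.1 (cl (Q.ux x))) (Q.subL (cl (Q.ux x)) (cl (Q.ux z))) :=
          q_mul_mono Q le_rfl ((Cx_closed Q cl hgc hint z).2.1 x)
      _ ≤ Q.subL V.1 (cl (Q.ux z)) := q_subL_trans Q _ _ _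
  have hy : Q.mul (Q.subL V'.1 (cl (Q.ux y))) (cl (Q.ux z) y) ≤ Q.subL V'.1 (cl (Q.ux z)) := by
    calc Q.mul (Q.subL V'.1 (cl (Q.ux y))) (cl (Q.ux z) y)
        ≤ Q.mul (Q.subL V'.1 (cl (Q.ux y))) (Q.subL (cl (Q.ux y)) (cl (Q.ux z))) :=
          q_mul_mono Q le_rfl ((Cx_closed Q cl hgc hint z).2.1 y)
      _ ≤ Q.subL V'.1 (cl (Q.ux z)) := q_subL_trans Q _ _ _
  calc Q.mul (Q.mul (Q.mul (U.1 z) (cl (Q.ux z) x)) (cl (Q.ux z) y))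
        (Q.mul (Q.subL V.1 (cl (Q.ux x))) (Q.subL V'.1 (cl (Q.ux y))))
      = Q.mul (Q.mul (U.1 z) (Q.mul (Q.subL V.1 (cl (Q.ux x))) (cl (Q.ux z) x)))
          (Q.mul (Q.subL V'.1 (cl (Q.ux y))) (cl (Q.ux z) y)) := by ac_rfl
    _ ≤ Q.mul (Q.mul (G (Cx Q cl hgc hint z)) (Q.subL V.1 (cl (Q.ux z))))
          (Q.subL V'.1 (cl (Q.ux z))) :=
        q_mul_mono Q (q_mul_mono Q (hG z) hx) hy
    _ ≤ ⨆ Z, Q.mul (Q.mul (G Z) (eo Q cl V Z)) (eo Q cl V' Z) :=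
        le_iSup (fun Z => Q.mul (Q.mul (G Z) (eo Q cl V Z)) (eo Q cl V' Z))
          (Cx Q cl hgc hint z)

theorem Dstar_directed (hgc : Q.IsGenClosure cl) (hint : Q.IsInterpolative cl)
    (U : Pt Q cl) : Q.IsDirectedL (eo Q cl) (Dstar Q cl U) := by
  constructor
  · calc Q.unit ≤ ⨆ x, U.1 x := U.2.1
      _ ≤ ⨆ W, Dstar Q cl U W := iSup_le fun x =>
          le_trans (le_Dstar_Cx Q cl hgc hint U x)
            (le_iSup (Dstar Q cl U) (Cx Q cl hgc hint x))
  · intro V V'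
    exact directed_core Q cl hgc hint U V V' (Dstar Q cl U) (le_Dstar_Cx Q cl hgc hint U)

theorem Dstar_sup (hgc : Q.IsGenClosure cl) (hint : Q.IsInterpolative cl)
    (U : Pt Q cl) : Q.IsSupL (eo Q cl) (Dstar Q cl U) U :=
  sup_core Q cl hgc hint U (Dstar Q cl U) (le_Dstar_Cx Q cl hgc hint U)
    (Dstar_le_eo Q cl U)

theorem wayBelow_le (hgc : Q.IsGenClosure cl) (hint : Q.IsInterpolative cl)
    (U V : Pt Q cl) : Q.wayBelow (eo Q cl) U V ≤ Dstar Q cl U V := by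
  have h1 : Q.wayBelow (eo Q cl) U V ≤
      Q.res (eo Q cl U U) (⨆ d, Q.mul (Dstar Q cl U d) (eo Q cl V d)) := by
    show (⨅ (D : Pt Q cl → L) (_ : Q.IsDirectedL (eo Q cl) D) (s : Pt Q cl)
        (_ : Q.IsSupL (eo Q cl) D s),
        Q.res (eo Q cl U s) (⨆ d, Q.mul (D d) (eo Q cl V d))) ≤ _
    refine le_trans (iInf_le _ (Dstar Q cl U)) ?_
    refine le_trans (iInf_le _ (Dstar_directed Q cl hgc hint U)) ?_
    exact le_trans (iInf_le _ U) (iInf_le _ (Dstar_sup Q cl hgc hint U))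
  calc Q.wayBelow (eo Q cl) U V
      ≤ Q.res (eo Q cl U U) (⨆ d, Q.mul (Dstar Q cl U d) (eo Q cl V d)) := h1
    _ ≤ Q.res Q.unit (⨆ d, Q.mul (Dstar Q cl U d) (eo Q cl V d)) :=
        q_res_mono Q (q_subL_refl Q U.1) le_rfl
    _ = ⨆ d, Q.mul (Dstar Q cl U d) (eo Q cl V d) := q_res_unit Q _
    _ ≤ Dstar Q cl U V := ?_
  refine iSup_le fun d => ?_
  show Q.mul (⨆ x, Q.mul (U.1 x) (Q.subL d.1 (cl (Q.ux x)))) (Q.subL V.1 d.1) ≤ _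
  rw [q_iSup_mul]
  refine iSup_le fun x => ?_
  calc Q.mul (Q.mul (U.1 x) (Q.subL d.1 (cl (Q.ux x)))) (Q.subL V.1 d.1)
      = Q.mul (U.1 x) (Q.mul (Q.subL V.1 d.1) (Q.subL d.1 (cl (Q.ux x)))) := by ac_rfl
    _ ≤ Q.mul (U.1 x) (Q.subL V.1 (cl (Q.ux x))) := q_mul_mono Q le_rfl (q_subL_trans Q _ _ _)
    _ ≤ Dstar Q cl U V := le_iSup (fun x' => Q.mul (U.1 x') (Q.subL V.1 (cl (Q.ux x')))) x

theorem wayBelow_directed (hgc : Q.IsGenClosure cl) (hint : Q.IsInterpolative cl)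
    (U : Pt Q cl) : Q.IsDirectedL (eo Q cl) (Q.wayBelow (eo Q cl) U) := by
  constructor
  · calc Q.unit ≤ ⨆ x, U.1 x := U.2.1
      _ ≤ ⨆ V, Q.wayBelow (eo Q cl) U V := iSup_le fun x =>
          le_trans (claim_a Q cl hgc hint U x)
            (le_iSup (Q.wayBelow (eo Q cl) U) (Cx Q cl hgc hint x))
  · intro V V'
    calc Q.mul (Q.wayBelow (eo Q cl) U V) (Q.wayBelow (eo Q cl) U V')
        ≤ Q.mul (Dstar Q cl U V) (Dstar Q cl U V') :=
          q_mul_mono Q (wayBelow_le Q cl hgc hint U V) (wayBelow_le Q cl hgc hint U V')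
      _ ≤ ⨆ Z, Q.mul (Q.mul (Q.wayBelow (eo Q cl) U Z) (eo Q cl V Z)) (eo Q cl V' Z) :=
          directed_core Q cl hgc hint U V V' (Q.wayBelow (eo Q cl) U)
            (claim_a Q cl hgc hint U)
end Stmt7Aux
open CommQuantale in
/-- For an interpolative generalized L-closure space X, the L-ordered set
(𝔠(X), sub) is a continuous L-dcpo. -/
theorem stmt7 {L X : Type u} [CompleteLattice L] (Q : CommQuantale L)
    (cl : (X → L) → (X → L)) (hgc : Q.IsGenClosure cl) (hint : Q.IsInterpolative cl) :
    Q.IsContinuousLDcpo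
      (fun U V : {U : X → L // Q.IsDirClosed cl U} => Q.subL U.1 V.1) := by
  show Q.IsContinuousLDcpo (Stmt7Aux.eo Q cl)
  exact ⟨Stmt7Aux.eo_order Q cl, Stmt7Aux.eo_dcpo Q cl, fun U =>
    ⟨Stmt7Aux.wayBelow_directed Q cl hgc hint U,
     Stmt7Aux.sup_core Q cl hgc hint U (Q.wayBelow (Stmt7Aux.eo Q cl) U)
       (Stmt7Aux.claim_a Q cl hgc hint U)
       (fun V => le_trans (Stmt7Aux.wayBelow_le Q cl hgc hint U V)
         (Stmt7Aux.Dstar_le_eo Q cl U V))⟩⟩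
end

section
/- Let L be a commutative unital quantale and let (P, e) be a continuous L-dcpo, equipped with the interpolative generalized L-closure operator ⟨A⟩ = ⋁_{x∈P} A(x) ⊗ ⇓x. Then the directed closed sets of (P, ⟨·⟩) are exactly the L-subsets ⇓x for x ∈ P; that is, 𝔠(P) = {⇓x | x ∈ P}. -/
universe u

section QuantaleHelpers

variable {L : Type u} [CompleteLattice L] (Q : CommQuantale L)

lemma q_mul_iSup {ι : Sort*} (a : L) (f : ι → L) :
    Q.mul a (⨆ i, f i) = ⨆ i, Q.mul a (f i) := by
  rw [iSup, Q.mul_sSup, iSup_range]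

lemma q_iSup_mul {ι : Sort*} (f : ι → L) (a : L) :
    Q.mul (⨆ i, f i) a = ⨆ i, Q.mul (f i) a := by
  rw [Q.mul_comm, q_mul_iSup]; simp only [Q.mul_comm]

lemma q_mul_bot (a : L) : Q.mul a ⊥ = ⊥ := by
  have := Q.mul_sSup a ∅; simpa using this

lemma q_bot_mul (a : L) : Q.mul ⊥ a = ⊥ := by rw [Q.mul_comm, q_mul_bot]

lemma q_unit_mul (a : L) : Q.mul Q.unit a = a := by rw [Q.mul_comm, Q.mul_unit]

lemma q_mul_le_mul {a b c d : L} (h1 : a ≤ c) (h2 : b ≤ d) :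
    Q.mul a b ≤ Q.mul c d := by
  have k1 : Q.mul a b ≤ Q.mul a d := by
    have h3 : sSup {b, d} = d := by rw [sSup_pair, sup_eq_right.mpr h2]
    have h4 := Q.mul_sSup a {b, d}
    rw [h3] at h4
    rw [h4]
    exact le_biSup _ (by simp)
  refine k1.trans ?_
  rw [Q.mul_comm a d, Q.mul_comm c d]
  have h3 : sSup {a, c} = c := by rw [sSup_pair, sup_eq_right.mpr h1]
  have h4 := Q.mul_sSup d {a, c}
  rw [h3] at h4
  rw [h4]
  exact le_biSup _ (by simp)

lemma q_le_res {a b c : L} (h : Q.mul a b ≤ c) : a ≤ Q.res b c := le_sSup h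

lemma q_res_mul (b c : L) : Q.mul (Q.res b c) b ≤ c := by
  unfold CommQuantale.res
  rw [Q.mul_comm, Q.mul_sSup]
  exact iSup₂_le fun s hs => by rw [Q.mul_comm]; exact hs

lemma q_mul_res_le {a b c : L} (h : a ≤ Q.res b c) : Q.mul a b ≤ c :=
  le_trans (q_mul_le_mul Q h le_rfl) (q_res_mul Q b c)

lemma q_le_of_unit_le_res {b c : L} (h : Q.unit ≤ Q.res b c) : b ≤ c := by
  have := q_mul_res_le Q h; rwa [q_unit_mul] at this

lemma q_le_of_le_res {a b c : L} (h1 : a ≤ Q.res b c) (h2 : Q.unit ≤ b) : a ≤ c :=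
  calc a = Q.mul a Q.unit := (Q.mul_unit a).symm
    _ ≤ Q.mul (Q.res b c) b := q_mul_le_mul Q h1 h2
    _ ≤ c := q_res_mul Q b c

lemma q_mul4 (a b c d : L) :
    Q.mul (Q.mul a b) (Q.mul c d) = Q.mul (Q.mul a c) (Q.mul b d) := by
  letI : Std.Associative Q.mul := ⟨Q.mul_assoc⟩
  letI : Std.Commutative Q.mul := ⟨Q.mul_comm⟩
  ac_rfl

lemma q_mul5 (p q r s t : L) :
    Q.mul (Q.mul (Q.mul p q) r) (Q.mul s t)
      = Q.mul (Q.mul p (Q.mul s q)) (Q.mul t r) := by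
  letI : Std.Associative Q.mul := ⟨Q.mul_assoc⟩
  letI : Std.Commutative Q.mul := ⟨Q.mul_comm⟩
  ac_rfl

end QuantaleHelpers
section WayBelowHelpers

open CommQuantale

variable {L P : Type u} [CompleteLattice L] (Q : CommQuantale L) (e : P → P → L)

lemma wb_le {D : P → L} (hD : Q.IsDirectedL e D) {s : P} (hs : Q.IsSupL e D s)
    (x y : P) :
    Q.wayBelow e x y ≤ Q.res (e x s) (⨆ d, Q.mul (D d) (e y d)) :=
  iInf_le_of_le D (iInf_le_of_le hD (iInf_le_of_le s (iInf_le _ hs)))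

lemma wb_mul_le {D : P → L} (hD : Q.IsDirectedL e D) {s : P} (hs : Q.IsSupL e D s)
    (x y : P) :
    Q.mul (Q.wayBelow e x y) (e x s) ≤ ⨆ d, Q.mul (D d) (e y d) :=
  q_mul_res_le Q (wb_le Q e hD hs x y)

variable (hord : Q.IsLOrder e)
variable (hcont : ∀ x, Q.IsDirectedL e (Q.wayBelow e x) ∧ Q.IsSupL e (Q.wayBelow e x) x)

include hord hcont in
/-- `⇓x(t) ≤ e(t,x)`. -/
lemma wb_le_e (x t : P) : Q.wayBelow e x t ≤ e t x := by
  have h := (hcont x).2 x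
  unfold CommQuantale.subL at h
  refine q_le_of_unit_le_res Q (le_trans (hord.1 x) ?_)
  exact h.le.trans (iInf_le _ t)

include hord in
/-- `e(y,d) ⊗ ⇓z(d) ≤ ⇓z(y)` : down-closedness of `⇓z`. -/
lemma e_mul_wb (y d z : P) :
    Q.mul (e y d) (Q.wayBelow e z d) ≤ Q.wayBelow e z y := by
  refine le_iInf fun D => le_iInf fun hD => le_iInf fun s => le_iInf fun hs => ?_
  refine q_le_res Q ?_
  calc Q.mul (Q.mul (e y d) (Q.wayBelow e z d)) (e z s)
      = Q.mul (e y d) (Q.mul (Q.wayBelow e z d) (e z s)) := Q.mul_assoc _ _ _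
    _ ≤ Q.mul (e y d) (⨆ t, Q.mul (D t) (e d t)) :=
        q_mul_le_mul Q le_rfl (wb_mul_le Q e hD hs z d)
    _ = ⨆ t, Q.mul (e y d) (Q.mul (D t) (e d t)) := q_mul_iSup Q _ _
    _ ≤ ⨆ t, Q.mul (D t) (e y t) := by
        refine iSup_mono fun t => ?_
        calc Q.mul (e y d) (Q.mul (D t) (e d t))
            = Q.mul (D t) (Q.mul (e y d) (e d t)) := by
              letI : Std.Associative Q.mul := ⟨Q.mul_assoc⟩
              letI : Std.Commutative Q.mul := ⟨Q.mul_comm⟩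
              ac_rfl
          _ ≤ Q.mul (D t) (e y t) := q_mul_le_mul Q le_rfl (hord.2.1 y d t)

include hord in
/-- `⇓z(a) ⊗ e(z,v) ≤ ⇓v(a)` : monotonicity of `⇓` in the index. -/
lemma wb_mul_e (a z v : P) :
    Q.mul (Q.wayBelow e z a) (e z v) ≤ Q.wayBelow e v a := by
  refine le_iInf fun D => le_iInf fun hD => le_iInf fun s => le_iInf fun hs => ?_
  refine q_le_res Q ?_
  calc Q.mul (Q.mul (Q.wayBelow e z a) (e z v)) (e v s)
      = Q.mul (Q.wayBelow e z a) (Q.mul (e z v) (e v s)) := Q.mul_assoc _ _ _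
    _ ≤ Q.mul (Q.wayBelow e z a) (e z s) := q_mul_le_mul Q le_rfl (hord.2.1 z v s)
    _ ≤ ⨆ t, Q.mul (D t) (e a t) := wb_mul_le Q e hD hs z a

include hord hcont in
/-- `⇓x(y) ≤ ⋁_d ⇓x(d) ⊗ e(y,d)`. -/
lemma wb_le_sup (x y : P) :
    Q.wayBelow e x y ≤ ⨆ d, Q.mul (Q.wayBelow e x d) (e y d) :=
  q_le_of_le_res Q (wb_le Q e (hcont x).1 (hcont x).2 x y) (hord.1 x)

end WayBelowHelpers
section Interpolation

open CommQuantale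

variable {L P : Type u} [CompleteLattice L] (Q : CommQuantale L) (e : P → P → L)

/-- `D = ⟨⇓x⟩`, i.e. `D(t) = ⋁_z ⇓x(z) ⊗ ⇓z(t)`. -/
def Dfun (x : P) : P → L :=
  fun t => ⨆ z, Q.mul (Q.wayBelow e x z) (Q.wayBelow e z t)

variable (hord : Q.IsLOrder e)
variable (hcont : ∀ x, Q.IsDirectedL e (Q.wayBelow e x) ∧ Q.IsSupL e (Q.wayBelow e x) x)

include hord hcont in
lemma Dfun_mul_le (x a b : P) :
    Q.mul (Dfun Q e x a) (Dfun Q e x b)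
      ≤ ⨆ v, Q.mul (Q.mul (Q.wayBelow e x v) (Q.wayBelow e v a)) (Q.wayBelow e v b) := by
  unfold Dfun
  rw [q_iSup_mul]
  refine iSup_le fun z => ?_
  rw [q_mul_iSup]
  refine iSup_le fun w => ?_
  calc Q.mul (Q.mul (Q.wayBelow e x z) (Q.wayBelow e z a))
        (Q.mul (Q.wayBelow e x w) (Q.wayBelow e w b))
      = Q.mul (Q.mul (Q.wayBelow e x z) (Q.wayBelow e x w))
          (Q.mul (Q.wayBelow e z a) (Q.wayBelow e w b)) := by
        letI : Std.Associative Q.mul := ⟨Q.mul_assoc⟩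
        letI : Std.Commutative Q.mul := ⟨Q.mul_comm⟩
        ac_rfl
    _ ≤ Q.mul (⨆ v, Q.mul (Q.mul (Q.wayBelow e x v) (e z v)) (e w v))
          (Q.mul (Q.wayBelow e z a) (Q.wayBelow e w b)) :=
        q_mul_le_mul Q ((hcont x).1.2 z w) le_rfl
    _ = ⨆ v, Q.mul (Q.mul (Q.mul (Q.wayBelow e x v) (e z v)) (e w v))
          (Q.mul (Q.wayBelow e z a) (Q.wayBelow e w b)) := q_iSup_mul Q _ _
    _ ≤ ⨆ v, Q.mul (Q.mul (Q.wayBelow e x v) (Q.wayBelow e v a)) (Q.wayBelow e v b) := by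
        refine iSup_mono fun v => ?_
        rw [q_mul5]
        refine q_mul_le_mul Q (q_mul_le_mul Q le_rfl ?_) ?_
        · exact wb_mul_e Q e hord a z v
        · exact wb_mul_e Q e hord b w v

include hord hcont in
lemma Dfun_directed (x : P) : Q.IsDirectedL e (Dfun Q e x) := by
  constructor
  · refine le_trans (hcont x).1.1 (iSup_le fun z => ?_)
    calc Q.wayBelow e x z
        = Q.mul (Q.wayBelow e x z) Q.unit := (Q.mul_unit _).symm
      _ ≤ Q.mul (Q.wayBelow e x z) (⨆ t, Q.wayBelow e z t) :=
          q_mul_le_mul Q le_rfl (hcont z).1.1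
      _ = ⨆ t, Q.mul (Q.wayBelow e x z) (Q.wayBelow e z t) := q_mul_iSup Q _ _
      _ ≤ ⨆ t, Dfun Q e x t :=
          iSup_mono fun t => le_iSup (fun w => Q.mul (Q.wayBelow e x w) (Q.wayBelow e w t)) z
  · intro a b
    refine le_trans (Dfun_mul_le Q e hord hcont x a b) (iSup_le fun v => ?_)
    calc Q.mul (Q.mul (Q.wayBelow e x v) (Q.wayBelow e v a)) (Q.wayBelow e v b)
        = Q.mul (Q.wayBelow e x v) (Q.mul (Q.wayBelow e v a) (Q.wayBelow e v b)) :=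
          Q.mul_assoc _ _ _
      _ ≤ Q.mul (Q.wayBelow e x v)
            (⨆ c, Q.mul (Q.mul (Q.wayBelow e v c) (e a c)) (e b c)) :=
          q_mul_le_mul Q le_rfl ((hcont v).1.2 a b)
      _ = ⨆ c, Q.mul (Q.wayBelow e x v)
            (Q.mul (Q.mul (Q.wayBelow e v c) (e a c)) (e b c)) := q_mul_iSup Q _ _
      _ ≤ ⨆ c, Q.mul (Q.mul (Dfun Q e x c) (e a c)) (e b c) := by
          refine iSup_mono fun c => ?_
          have heq : Q.mul (Q.wayBelow e x v)
              (Q.mul (Q.mul (Q.wayBelow e v c) (e a c)) (e b c))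
              = Q.mul (Q.mul (Q.mul (Q.wayBelow e x v) (Q.wayBelow e v c)) (e a c)) (e b c) := by
            letI : Std.Associative Q.mul := ⟨Q.mul_assoc⟩
            letI : Std.Commutative Q.mul := ⟨Q.mul_comm⟩
            ac_rfl
          rw [heq]
          refine q_mul_le_mul Q (q_mul_le_mul Q ?_ le_rfl) le_rfl
          exact le_iSup (fun w => Q.mul (Q.wayBelow e x w) (Q.wayBelow e w c)) v

include hord hcont in
lemma unit_le_e_of_DfunSup (x : P) {s : P} (hs : Q.IsSupL e (Dfun Q e x) s) :
    Q.unit ≤ e x s := by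
  have hDsub : ∀ t, Dfun Q e x t ≤ e t s := by
    intro t
    have h := hs s
    unfold CommQuantale.subL at h
    exact q_le_of_unit_le_res Q (le_trans (hord.1 s) (h.le.trans (iInf_le _ t)))
  have hx := (hcont x).2 s
  unfold CommQuantale.subL at hx
  rw [hx]
  refine le_iInf fun w => q_le_res Q ?_
  rw [q_unit_mul]
  show Q.wayBelow e x w ≤ e w s
  have hw := (hcont w).2 s
  unfold CommQuantale.subL at hw
  rw [hw]
  refine le_iInf fun t => q_le_res Q ?_
  refine le_trans ?_ (hDsub t)
  exact le_iSup (fun z => Q.mul (Q.wayBelow e x z) (Q.wayBelow e z t)) w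

variable (hdcpo : Q.IsDcpoL e)

include hord hcont hdcpo in
/-- Interpolation: `⇓x(y) ≤ ⋁_z ⇓x(z) ⊗ ⇓z(y)`. -/
lemma wb_interp (x y : P) :
    Q.wayBelow e x y ≤ ⨆ z, Q.mul (Q.wayBelow e x z) (Q.wayBelow e z y) := by
  obtain ⟨s, hs⟩ := hdcpo _ (Dfun_directed Q e hord hcont x)
  have h3 : Q.wayBelow e x y ≤ ⨆ d, Q.mul (Dfun Q e x d) (e y d) :=
    q_le_of_le_res Q (wb_le Q e (Dfun_directed Q e hord hcont x) hs x y)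
      (unit_le_e_of_DfunSup Q e hord hcont x hs)
  refine h3.trans (iSup_le fun d => ?_)
  unfold Dfun
  rw [q_iSup_mul]
  refine iSup_le fun z => ?_
  refine le_trans ?_ (le_iSup (fun z => Q.mul (Q.wayBelow e x z) (Q.wayBelow e z y)) z)
  calc Q.mul (Q.mul (Q.wayBelow e x z) (Q.wayBelow e z d)) (e y d)
      = Q.mul (Q.wayBelow e x z) (Q.mul (e y d) (Q.wayBelow e z d)) := by
        letI : Std.Associative Q.mul := ⟨Q.mul_assoc⟩
        letI : Std.Commutative Q.mul := ⟨Q.mul_comm⟩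
        ac_rfl
    _ ≤ Q.mul (Q.wayBelow e x z) (Q.wayBelow e z y) :=
        q_mul_le_mul Q le_rfl (e_mul_wb Q e hord y d z)

end Interpolation
section MainHelpers

open CommQuantale

variable {L P : Type u} [CompleteLattice L] (Q : CommQuantale L) (e : P → P → L)

lemma cl_ux (x t : P) :
    (⨆ y, Q.mul (Q.ux x y) (Q.wayBelow e y t)) = Q.wayBelow e x t := by
  apply le_antisymm
  · refine iSup_le fun y => ?_
    by_cases h : y = x
    · subst h; simp [CommQuantale.ux, q_unit_mul]
    · simp [CommQuantale.ux, h, q_bot_mul]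
  · have h := le_iSup (fun y => Q.mul (Q.ux x y) (Q.wayBelow e y t)) x
    simpa [CommQuantale.ux, q_unit_mul] using h

end MainHelpers

open CommQuantale in
/-- For a continuous L-dcpo (P,e) with ⟨A⟩ = ⋁ₓ A(x) ⊗ ⇓x,
the directed closed sets are exactly the ⇓x: 𝔠(P) = {⇓x | x ∈ P}. -/
theorem stmt9 {L P : Type u} [CompleteLattice L] (Q : CommQuantale L)
    (e : P → P → L) (hord : Q.IsLOrder e) (hdcpo : Q.IsDcpoL e)
    (hcont : ∀ x, Q.IsDirectedL e (Q.wayBelow e x) ∧ Q.IsSupL e (Q.wayBelow e x) x) :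
    {U : P → L |
        Q.IsDirClosed (fun A : P → L => fun t => ⨆ x, Q.mul (A x) (Q.wayBelow e x t)) U}
      = {U : P → L | ∃ x, U = Q.wayBelow e x} := by
  ext U
  simp only [Set.mem_setOf_eq, IsDirClosed, CommQuantale.subL, cl_ux]
  constructor
  · rintro ⟨h1, h2, h3, h4⟩
    have hUdir : Q.IsDirectedL e U := by
      refine ⟨h1, fun a b => (h4 a b).trans (iSup_mono fun z => ?_)⟩
      exact q_mul_le_mul Q
        (q_mul_le_mul Q le_rfl (wb_le_e Q e hord hcont z a))
        (wb_le_e Q e hord hcont z b)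
    obtain ⟨s, hs⟩ := hdcpo U hUdir
    have hUz : ∀ z, U z ≤ e z s := by
      intro z
      have h := hs s
      unfold CommQuantale.subL at h
      exact q_le_of_unit_le_res Q ((hord.1 s).trans (h.le.trans (iInf_le _ z)))
    refine ⟨s, funext fun y => le_antisymm ?_ ?_⟩
    · -- U y ≤ ⇓s(y)
      refine le_iInf fun D => le_iInf fun hD => le_iInf fun sD => le_iInf fun hsD =>
        q_le_res Q ?_
      have hstep : ∀ z, Q.mul (Q.mul (U z) (Q.wayBelow e z y)) (e s sD)
          ≤ ⨆ d, Q.mul (D d) (e y d) := by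
        intro z
        calc Q.mul (Q.mul (U z) (Q.wayBelow e z y)) (e s sD)
            ≤ Q.mul (Q.mul (e z s) (Q.wayBelow e z y)) (e s sD) :=
              q_mul_le_mul Q (q_mul_le_mul Q (hUz z) le_rfl) le_rfl
          _ = Q.mul (Q.wayBelow e z y) (Q.mul (e z s) (e s sD)) := by
              letI : Std.Associative Q.mul := ⟨Q.mul_assoc⟩
              letI : Std.Commutative Q.mul := ⟨Q.mul_comm⟩
              ac_rfl
          _ ≤ Q.mul (Q.wayBelow e z y) (e z sD) :=
              q_mul_le_mul Q le_rfl (hord.2.1 z s sD)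
          _ ≤ Q.wayBelow e sD y := wb_mul_e Q e hord y z sD
          _ ≤ ⨆ d, Q.mul (D d) (e y d) :=
              q_le_of_le_res Q (wb_le Q e hD hsD sD y) (hord.1 sD)
      calc Q.mul (U y) (e s sD)
          ≤ Q.mul (⨆ z, Q.mul (U z) (Q.wayBelow e z y)) (e s sD) :=
            q_mul_le_mul Q (h3 y) le_rfl
        _ = ⨆ z, Q.mul (Q.mul (U z) (Q.wayBelow e z y)) (e s sD) := q_iSup_mul Q _ _
        _ ≤ ⨆ d, Q.mul (D d) (e y d) := iSup_le hstep
    · -- ⇓s(y) ≤ U y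
      have hA : Q.wayBelow e s y ≤ ⨆ d, Q.mul (U d) (e y d) :=
        q_le_of_le_res Q (wb_le Q e hUdir hs s y) (hord.1 s)
      refine hA.trans (iSup_le fun d => ?_)
      calc Q.mul (U d) (e y d)
          ≤ Q.mul (⨆ z, Q.mul (U z) (Q.wayBelow e z d)) (e y d) :=
            q_mul_le_mul Q (h3 d) le_rfl
        _ = ⨆ z, Q.mul (Q.mul (U z) (Q.wayBelow e z d)) (e y d) := q_iSup_mul Q _ _
        _ ≤ U y := by
            refine iSup_le fun z => ?_
            calc Q.mul (Q.mul (U z) (Q.wayBelow e z d)) (e y d)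
                = Q.mul (U z) (Q.mul (e y d) (Q.wayBelow e z d)) := by
                  letI : Std.Associative Q.mul := ⟨Q.mul_assoc⟩
                  letI : Std.Commutative Q.mul := ⟨Q.mul_comm⟩
                  ac_rfl
              _ ≤ Q.mul (U z) (Q.wayBelow e z y) :=
                  q_mul_le_mul Q le_rfl (e_mul_wb Q e hord y d z)
              _ ≤ U y := q_mul_res_le Q ((h2 z).trans (iInf_le _ y))
  · rintro ⟨x, rfl⟩
    refine ⟨(hcont x).1.1, ?_, ?_, ?_⟩
    · intro t
      refine le_iInf fun v => q_le_res Q ?_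
      calc Q.mul (Q.wayBelow e x t) (Q.wayBelow e t v)
          ≤ Q.mul (Q.wayBelow e x t) (e v t) :=
            q_mul_le_mul Q le_rfl (wb_le_e Q e hord hcont t v)
        _ = Q.mul (e v t) (Q.wayBelow e x t) := Q.mul_comm _ _
        _ ≤ Q.wayBelow e x v := e_mul_wb Q e hord v t x
    · intro t
      exact wb_interp Q e hord hcont hdcpo x t
    · intro a b
      refine le_trans (q_mul_le_mul Q (wb_interp Q e hord hcont hdcpo x a)
        (wb_interp Q e hord hcont hdcpo x b)) ?_
      exact Dfun_mul_le Q e hord hcont x a b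
end
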